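/- The operators π₇ = ¼(Id − J₂) and π₂₁ = ¼(3·Id + J₂) on 2-forms are complementary projectors onto the eigenspaces of J₂: π₇ + π₂₁ = Id, π₇ ∘ π₇ = π₇, π₂₁ ∘ π₂₁ = π₂₁, π₇ ∘ π₂₁ = 0, and moreover J₂ ∘ π₇ = −3 π₇ and J₂ ∘ π₂₁ = π₂₁. -/
import Mathlib


namespace Spin7

noncomputable section

/-- Kronecker delta on `Fin 8`. -/
def kron (i j : Fin 8) : ℝ := if i = j then 1 else 0

/-- A 2-form: totally antisymmetric 2-tensor. -/
def Alt2 (β : Fin 8 → Fin 8 → ℝ) : Prop := ∀ i j, β i j = -β j i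

/-- A 3-form: totally antisymmetric 3-tensor. -/
def Alt3 (γ : Fin 8 → Fin 8 → Fin 8 → ℝ) : Prop :=
  ∀ i j k, γ i j k = -γ j i k ∧ γ i j k = -γ i k j

/-- A 4-form: totally antisymmetric 4-tensor. -/
def Alt4 (Φ : Fin 8 → Fin 8 → Fin 8 → Fin 8 → ℝ) : Prop :=
  ∀ i j k l, Φ i j k l = -Φ j i k l ∧ Φ i j k l = -Φ i k j l ∧ Φ i j k l = -Φ i j l k

/-- The Cayley contraction identity for a 4-form `Φ`. -/
def Cayley (Φ : Fin 8 → Fin 8 → Fin 8 → Fin 8 → ℝ) : Prop :=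
  ∀ i j k a b c : Fin 8,
    (∑ p, Φ i j k p * Φ a b c p) =
      kron i a * kron j b * kron k c + kron i b * kron j c * kron k a
        + kron i c * kron j a * kron k b
      - kron i a * kron j c * kron k b - kron i c * kron j b * kron k a
      - kron i b * kron j a * kron k c
      - kron i a * Φ j k b c - kron j a * Φ k i b c - kron k a * Φ i j b c
      - kron i b * Φ j k c a - kron j b * Φ k i c a - kron k b * Φ i j c a
      - kron i c * Φ j k a b - kron j c * Φ k i a b - kron k c * Φ i j a b

/-- The operator J₂ on 2-forms: `J₂(β)_{ij} = ½ Φ_{ijab} β_{ab}`. -/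
def J2 (Φ : Fin 8 → Fin 8 → Fin 8 → Fin 8 → ℝ) (β : Fin 8 → Fin 8 → ℝ) :
    Fin 8 → Fin 8 → ℝ :=
  fun i j => (1/2 : ℝ) * ∑ a, ∑ b, Φ i j a b * β a b

/-- π₇ = ¼(Id − J₂). -/
def pi7 (Φ : Fin 8 → Fin 8 → Fin 8 → Fin 8 → ℝ) (β : Fin 8 → Fin 8 → ℝ) :
    Fin 8 → Fin 8 → ℝ :=
  fun i j => (1/4 : ℝ) * (β i j - J2 Φ β i j)

/-- π₂₁ = ¼(3·Id + J₂). -/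
def pi21 (Φ : Fin 8 → Fin 8 → Fin 8 → Fin 8 → ℝ) (β : Fin 8 → Fin 8 → ℝ) :
    Fin 8 → Fin 8 → ℝ :=
  fun i j => (1/4 : ℝ) * (3 * β i j + J2 Φ β i j)

/-- The operator J₃ on 3-forms. -/
def J3 (Φ : Fin 8 → Fin 8 → Fin 8 → Fin 8 → ℝ) (γ : Fin 8 → Fin 8 → Fin 8 → ℝ) :
    Fin 8 → Fin 8 → Fin 8 → ℝ :=
  fun i j k => (1/2 : ℝ) *
    ∑ p, ∑ q, (Φ i j p q * γ k p q + Φ j k p q * γ i p q + Φ k i p q * γ j p q)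

/-- π₈ = (1/7)(Id − J₃). -/
def pi8 (Φ : Fin 8 → Fin 8 → Fin 8 → Fin 8 → ℝ) (γ : Fin 8 → Fin 8 → Fin 8 → ℝ) :
    Fin 8 → Fin 8 → Fin 8 → ℝ :=
  fun i j k => (1/7 : ℝ) * (γ i j k - J3 Φ γ i j k)

/-- π₄₈ = (6/7)(Id + (1/6)J₃). -/
def pi48 (Φ : Fin 8 → Fin 8 → Fin 8 → Fin 8 → ℝ) (γ : Fin 8 → Fin 8 → Fin 8 → ℝ) :
    Fin 8 → Fin 8 → Fin 8 → ℝ :=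
  fun i j k => (6/7 : ℝ) * (γ i j k + (1/6 : ℝ) * J3 Φ γ i j k)

/-- The operator J₄ on 4-forms. -/
def J4 (Φ σ : Fin 8 → Fin 8 → Fin 8 → Fin 8 → ℝ) :
    Fin 8 → Fin 8 → Fin 8 → Fin 8 → ℝ :=
  fun i j k l => (1/2 : ℝ) * ∑ p, ∑ q,
    (Φ i j p q * σ p q k l + Φ k i p q * σ p q j l + Φ i l p q * σ p q j k
      + Φ k l p q * σ p q i j + Φ j l p q * σ p q k i + Φ j k p q * σ p q i l)

/-- Antisymmetrization with weight 1/4! over four `Fin 8` indices. -/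
def asym4 (g : Fin 8 → Fin 8 → Fin 8 → Fin 8 → ℝ) (i j k l : Fin 8) : ℝ :=
  (1/24 : ℝ) * ∑ τ : Equiv.Perm (Fin 4),
    ((Equiv.Perm.sign τ : ℤ) : ℝ) *
      g (![i, j, k, l] (τ 0)) (![i, j, k, l] (τ 1)) (![i, j, k, l] (τ 2)) (![i, j, k, l] (τ 3))

/-- Simultaneous antisymmetrization (weight 1/4! each) over a lower group of four
indices and an upper group of four indices. -/
def asym44 (F : Fin 8 → Fin 8 → Fin 8 → Fin 8 → Fin 8 → Fin 8 → Fin 8 → Fin 8 → ℝ)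
    (i j k l a b c d : Fin 8) : ℝ :=
  asym4 (fun i' j' k' l' => asym4 (F i' j' k' l') a b c d) i j k l

/-- The projector π₂₇ on 4-forms. -/
def pi27 (Φ σ : Fin 8 → Fin 8 → Fin 8 → Fin 8 → ℝ) :
    Fin 8 → Fin 8 → Fin 8 → Fin 8 → ℝ :=
  fun i j k l => (3/32 : ℝ) *
    (asym4 (fun i' j' k' l' =>
        ∑ a, ∑ b, ∑ c, ∑ d, Φ i' j' a b * Φ k' l' c d * σ a b c d) i j k l
      - 4 * asym4 (fun i' j' k' l' => ∑ a, ∑ b, Φ i' j' a b * σ k' l' a b) i j k l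
      - (1/7 : ℝ) * Φ i j k l * (∑ a, ∑ b, ∑ c, ∑ d, Φ a b c d * σ a b c d)
      + 4 * σ i j k l)

/-- The map `K(H)_{ijkl} = H_{ip}Φ_{pjkl} − H_{jp}Φ_{pikl} + H_{kp}Φ_{pijl} − H_{lp}Φ_{pijk}`. -/
def Kmap (Φ : Fin 8 → Fin 8 → Fin 8 → Fin 8 → ℝ) (H : Fin 8 → Fin 8 → ℝ) :
    Fin 8 → Fin 8 → Fin 8 → Fin 8 → ℝ :=
  fun i j k l => ∑ p,
    (H i p * Φ p j k l - H j p * Φ p i k l + H k p * Φ p i j l - H l p * Φ p i j k)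

/-- The map `K'(σ)_{ij} = ½ Φ_{ipqr} σ_{jpqr} − ½ Φ_{jpqr} σ_{ipqr}`. -/
def Kprime (Φ σ : Fin 8 → Fin 8 → Fin 8 → Fin 8 → ℝ) : Fin 8 → Fin 8 → ℝ :=
  fun i j => (1/2 : ℝ) * ∑ p, ∑ q, ∑ r, (Φ i p q r * σ j p q r - Φ j p q r * σ i p q r)

/-- The totally antisymmetric Levi-Civita symbol on 8 indices with `ε_{12345678} = 1`. -/
def eps8 (v : Fin 8 → Fin 8) : ℝ :=
  Matrix.det (Matrix.of fun r c => if v r = c then (1 : ℝ) else 0)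

/-- Self-duality of the 4-form `Φ`. -/
def SelfDual (Φ : Fin 8 → Fin 8 → Fin 8 → Fin 8 → ℝ) : Prop :=
  ∀ i j k l, (1/24 : ℝ) *
    (∑ a, ∑ b, ∑ c, ∑ d, eps8 ![i, j, k, l, a, b, c, d] * Φ a b c d) = Φ i j k l

/-- Antisymmetrization with weight 1/5! over five `Fin 8` indices. -/
def asym5 (g : Fin 8 → Fin 8 → Fin 8 → Fin 8 → Fin 8 → ℝ) (a i j k l : Fin 8) : ℝ :=
  (1/120 : ℝ) * ∑ τ : Equiv.Perm (Fin 5),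
    ((Equiv.Perm.sign τ : ℤ) : ℝ) *
      g (![a, i, j, k, l] (τ 0)) (![a, i, j, k, l] (τ 1)) (![a, i, j, k, l] (τ 2))
        (![a, i, j, k, l] (τ 3)) (![a, i, j, k, l] (τ 4))

variable {Φ : Fin 8 → Fin 8 → Fin 8 → Fin 8 → ℝ}

lemma z34 (hΦ : Alt4 Φ) (a b c : Fin 8) : Φ a b c c = 0 := by
  have := (hΦ a b c c).2.2; linarith
lemma z23 (hΦ : Alt4 Φ) (a b c : Fin 8) : Φ a b b c = 0 := by
  have := (hΦ a b b c).2.1; linarith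
lemma z24 (hΦ : Alt4 Φ) (a b c : Fin 8) : Φ a b c b = 0 := by
  have := (hΦ a b c b).2.1; rw [this, z34 hΦ]; ring
lemma z13 (hΦ : Alt4 Φ) (a b c : Fin 8) : Φ a b a c = 0 := by
  have := (hΦ a b a c).1; rw [this, z23 hΦ]; ring
lemma z14 (hΦ : Alt4 Φ) (a b c : Fin 8) : Φ a b c a = 0 := by
  have := (hΦ a b c a).1; rw [this, z24 hΦ]; ring

lemma pairswap (hΦ : Alt4 Φ) (a b c d : Fin 8) : Φ a b c d = Φ c d a b := by
  rw [(hΦ a b c d).2.1, (hΦ a c b d).1, (hΦ c a b d).2.2, (hΦ c a d b).2.1]; ring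

lemma contract2 (hΦ : Alt4 Φ) (hC : Cayley Φ) (i j c d : Fin 8) :
    (∑ k, ∑ p, Φ i j k p * Φ c d k p) =
      6 * kron i c * kron j d - 6 * kron i d * kron j c - 4 * Φ i j c d := by
  have h : ∀ k : Fin 8, (∑ p, Φ i j k p * Φ c d k p) =
      kron i c * kron j d * kron k k + kron i d * kron j k * kron k c
        + kron i k * kron j c * kron k d
      - kron i c * kron j k * kron k d - kron i k * kron j d * kron k c
      - kron i d * kron j c * kron k k
      - kron i c * Φ j k d k - kron j c * Φ k i d k - kron k c * Φ i j d k
      - kron i d * Φ j k k c - kron j d * Φ k i k c - kron k d * Φ i j k c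
      - kron i k * Φ j k c d - kron j k * Φ k i c d - kron k k * Φ i j c d := fun k => hC i j k c d k
  simp_rw [h, z24 hΦ, z14 hΦ, z23 hΦ, z13 hΦ, mul_zero, sub_zero]
  have hkk : ∀ k : Fin 8, kron k k = (1:ℝ) := fun k => by simp [kron]
  simp_rw [hkk, mul_one]
  simp only [kron, Finset.sum_sub_distrib, Finset.sum_add_distrib, ite_mul, mul_ite,
    one_mul, mul_one, zero_mul, mul_zero, Finset.sum_ite_eq, Finset.sum_ite_eq',
    Finset.mem_univ, if_true, Finset.sum_const, Finset.card_univ, Fintype.card_fin,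
    nsmul_eq_mul]
  have h1 : Φ i j d c = -Φ i j c d := by have := (hΦ i j c d).2.2; linarith
  have h2 : Φ j i c d = -Φ i j c d := by have := (hΦ i j c d).1; linarith
  rw [h1, h2]
  split_ifs <;> ring

lemma sum4_reorder (f : Fin 8 → Fin 8 → Fin 8 → Fin 8 → ℝ) :
    (∑ a, ∑ b, ∑ c, ∑ d, f a b c d) = ∑ c, ∑ d, ∑ a, ∑ b, f a b c d :=
  calc (∑ a, ∑ b, ∑ c, ∑ d, f a b c d)
      = ∑ a, ∑ c, ∑ b, ∑ d, f a b c d :=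
        Finset.sum_congr rfl fun a _ => Finset.sum_comm
    _ = ∑ c, ∑ a, ∑ b, ∑ d, f a b c d := Finset.sum_comm
    _ = ∑ c, ∑ a, ∑ d, ∑ b, f a b c d :=
        Finset.sum_congr rfl fun c _ => Finset.sum_congr rfl fun a _ => Finset.sum_comm
    _ = ∑ c, ∑ d, ∑ a, ∑ b, f a b c d :=
        Finset.sum_congr rfl fun c _ => Finset.sum_comm

lemma sum_kron (a : Fin 8) (f : Fin 8 → ℝ) : (∑ x, kron a x * f x) = f a := by
  simp [kron, ite_mul, Finset.sum_ite_eq]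

lemma J2J2 (hΦ : Alt4 Φ) (hC : Cayley Φ) (β : Fin 8 → Fin 8 → ℝ) (hβ : Alt2 β)
    (i j : Fin 8) : J2 Φ (J2 Φ β) i j = 3 * β i j - 2 * J2 Φ β i j := by
  have key : ∀ a b : Fin 8, (∑ c, ∑ d, Φ a b c d * β c d) = ∑ c, ∑ d, Φ c d a b * β c d := by
    intro a b
    exact Finset.sum_congr rfl fun c _ => Finset.sum_congr rfl fun d _ => by
      rw [pairswap hΦ]
  have main : (∑ a, ∑ b, Φ i j a b * ((1/2:ℝ) * ∑ c, ∑ d, Φ a b c d * β c d))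
      = (1/2:ℝ) * ∑ c, ∑ d, (∑ a, ∑ b, Φ i j a b * Φ c d a b) * β c d := by
    simp_rw [key, Finset.mul_sum, Finset.sum_mul]
    rw [sum4_reorder]
    refine Finset.sum_congr rfl fun c _ => Finset.sum_congr rfl fun d _ => ?_
    rw [Finset.mul_sum]
    refine Finset.sum_congr rfl fun a _ => ?_
    rw [Finset.mul_sum]
    exact Finset.sum_congr rfl fun b _ => by ring
  simp only [J2] at main ⊢
  rw [main]
  simp_rw [contract2 hΦ hC]
  have expand : ∀ c d : Fin 8,
      (6 * kron i c * kron j d - 6 * kron i d * kron j c - 4 * Φ i j c d) * β c d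
      = kron j d * (6 * kron i c * β c d) - kron i d * (6 * kron j c * β c d)
        - 4 * (Φ i j c d * β c d) := fun c d => by ring
  simp_rw [expand, Finset.sum_sub_distrib, sum_kron, ← Finset.mul_sum]
  have h1 : (∑ c, 6 * kron i c * β c j) = 6 * β i j := by
    have e : ∀ c : Fin 8, 6 * kron i c * β c j = kron i c * (6 * β c j) := fun c => by ring
    simp_rw [e, sum_kron]
  have h2 : (∑ c, 6 * kron j c * β c i) = 6 * β j i := by
    have e : ∀ c : Fin 8, 6 * kron j c * β c i = kron j c * (6 * β c i) := fun c => by ring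
    simp_rw [e, sum_kron]
  rw [h1, h2, hβ j i]
  ring

lemma J2_lin (s t : ℝ) (f g : Fin 8 → Fin 8 → ℝ) (i j : Fin 8) :
    J2 Φ (fun a b => s * f a b + t * g a b) i j = s * J2 Φ f i j + t * J2 Φ g i j := by
  simp only [J2]
  have e : ∀ a b : Fin 8, Φ i j a b * (s * f a b + t * g a b)
      = s * (Φ i j a b * f a b) + t * (Φ i j a b * g a b) := fun a b => by ring
  simp_rw [e, Finset.sum_add_distrib, ← Finset.mul_sum]
  ring

/-- `π₇ = ¼(Id − J₂)` and `π₂₁ = ¼(3·Id + J₂)` are complementary projectors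
onto the eigenspaces of J₂ on 2-forms. -/
theorem pi7_pi21_projectors (Φ : Fin 8 → Fin 8 → Fin 8 → Fin 8 → ℝ)
    (hΦ : Alt4 Φ) (hCayley : Cayley Φ) :
    ∀ β : Fin 8 → Fin 8 → ℝ, Alt2 β → ∀ i j,
      pi7 Φ β i j + pi21 Φ β i j = β i j ∧
      pi7 Φ (pi7 Φ β) i j = pi7 Φ β i j ∧
      pi21 Φ (pi21 Φ β) i j = pi21 Φ β i j ∧
      pi7 Φ (pi21 Φ β) i j = 0 ∧
      J2 Φ (pi7 Φ β) i j = -3 * pi7 Φ β i j ∧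
      J2 Φ (pi21 Φ β) i j = pi21 Φ β i j := by
  intro β hβ i j
  have hY := J2J2 hΦ hCayley β hβ
  have hp7f : pi7 Φ β = fun a b => (1/4:ℝ) * β a b + (-(1/4):ℝ) * J2 Φ β a b := by
    funext a b; simp only [pi7]; ring
  have hp21f : pi21 Φ β = fun a b => (3/4:ℝ) * β a b + (1/4:ℝ) * J2 Φ β a b := by
    funext a b; simp only [pi21]; ring
  have hJ7 : ∀ a b, J2 Φ (pi7 Φ β) a b
      = (1/4:ℝ) * J2 Φ β a b + (-(1/4):ℝ) * J2 Φ (J2 Φ β) a b := by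
    intro a b; rw [hp7f, J2_lin]
  have hJ21 : ∀ a b, J2 Φ (pi21 Φ β) a b
      = (3/4:ℝ) * J2 Φ β a b + (1/4:ℝ) * J2 Φ (J2 Φ β) a b := by
    intro a b; rw [hp21f, J2_lin]
  refine ⟨by simp only [pi7, pi21]; ring, ?_, ?_, ?_, ?_, ?_⟩
  · show (1/4:ℝ) * (pi7 Φ β i j - J2 Φ (pi7 Φ β) i j) = pi7 Φ β i j
    rw [hJ7 i j, hY i j]; simp only [pi7]; ring
  · show (1/4:ℝ) * (3 * pi21 Φ β i j + J2 Φ (pi21 Φ β) i j) = pi21 Φ β i j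
    rw [hJ21 i j, hY i j]; simp only [pi21]; ring
  · show (1/4:ℝ) * (pi21 Φ β i j - J2 Φ (pi21 Φ β) i j) = 0
    rw [hJ21 i j, hY i j]; simp only [pi21]; ring
  · rw [hJ7 i j, hY i j]; simp only [pi7]; ring
  · rw [hJ21 i j, hY i j]; simp only [pi21]; ring
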